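/- Let (s_x,s_α,h) be a SeqSL model and φ a PSeqSL formula, and let B be the set consisting of the first |FV_x(φ)| locations of Loc. Then there exists a model (s_x',s_α',h') such that s_x' maps every program variable outside FV_x(φ) into {nil, #}, s_x' maps FV_x(φ) into B ∪ {nil, #}, and (s_x,s_α,h) ≈_{FV_x(φ)} (s_x',s_α',h'). -/
import Mathlib


/-! Common framework for sequence-heap separation logic (SeqSL / PSeqSL).

Values: `Sum.inl n` is an element of `Loc ∪ Val = ℕ` (locations are the
naturals), `Sum.inr` is one of the two atoms `nil` and `#`.  A heap is a
finite partial map from locations to finite sequences of values. -/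

inductive SAtom : Type
  | anil : SAtom
  | ahash : SAtom
deriving DecidableEq

abbrev SVal : Type := ℕ ⊕ SAtom

abbrev Word : Type := List SVal

abbrev Heap : Type := Finmap fun _ : ℕ => Word

/-- Program-variable terms: `nil`, `#`, or a program variable. -/
inductive PTerm : Type
  | nil : PTerm
  | hash : PTerm
  | pvar : ℕ → PTerm
deriving DecidableEq

/-- Sequence terms: `ε`, an individual term, a sequence variable, or a
concatenation. -/
inductive STerm : Type
  | eps : STerm
  | atom : PTerm → STerm
  | svar : ℕ → STerm
  | conc : STerm → STerm → STerm
deriving DecidableEq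

/-- PSeqSL formulas. -/
inductive PFormula : Type
  | eqx : PTerm → PTerm → PFormula
  | eqs : STerm → STerm → PFormula
  | fls : PFormula
  | imp : PFormula → PFormula → PFormula
  | emp : PFormula
  | pto : ℕ → STerm → PFormula
  | star : PFormula → PFormula → PFormula
  | wand : PFormula → PFormula → PFormula
deriving DecidableEq

def PTerm.eval (sx : ℕ → SVal) : PTerm → SVal
  | .nil => Sum.inr SAtom.anil
  | .hash => Sum.inr SAtom.ahash
  | .pvar x => sx x

def STerm.eval (sx : ℕ → SVal) (sa : ℕ → Word) : STerm → Word
  | .eps => []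
  | .atom t => [t.eval sx]
  | .svar a => sa a
  | .conc t₁ t₂ => t₁.eval sx sa ++ t₂.eval sx sa

/-- Satisfaction of PSeqSL formulas. -/
def PFormula.Sat (sx : ℕ → SVal) (sa : ℕ → Word) : PFormula → Heap → Prop
  | .eqx t₁ t₂, _ => t₁.eval sx = t₂.eval sx
  | .eqs t₁ t₂, _ => t₁.eval sx sa = t₂.eval sx sa
  | .fls, _ => False
  | .imp φ₁ φ₂, h => PFormula.Sat sx sa φ₁ h → PFormula.Sat sx sa φ₂ h
  | .emp, h => h = ∅
  | .pto x t, h => ∃ l : ℕ, sx x = Sum.inl l ∧ h = Finmap.singleton l (t.eval sx sa)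
  | .star φ₁ φ₂, h => ∃ h₁ h₂ : Heap, h₁.Disjoint h₂ ∧ h = h₁ ∪ h₂ ∧
      PFormula.Sat sx sa φ₁ h₁ ∧ PFormula.Sat sx sa φ₂ h₂
  | .wand φ₁ φ₂, h => ∀ h₁ : Heap, h₁.Disjoint h → PFormula.Sat sx sa φ₁ h₁ →
      PFormula.Sat sx sa φ₂ (h₁ ∪ h)

/-- Free program variables of a program-variable term. -/
def PTerm.fv : PTerm → Finset ℕ
  | .pvar x => {x}
  | _ => ∅

/-- Free program variables of a sequence term. -/
def STerm.fvx : STerm → Finset ℕ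
  | .eps => ∅
  | .atom t => t.fv
  | .svar _ => ∅
  | .conc t₁ t₂ => t₁.fvx ∪ t₂.fvx

/-- Free program variables of a PSeqSL formula. -/
def PFormula.fvx : PFormula → Finset ℕ
  | .eqx t₁ t₂ => t₁.fv ∪ t₂.fv
  | .eqs t₁ t₂ => t₁.fvx ∪ t₂.fvx
  | .fls => ∅
  | .imp φ₁ φ₂ => φ₁.fvx ∪ φ₂.fvx
  | .emp => ∅
  | .pto x t => {x} ∪ t.fvx
  | .star φ₁ φ₂ => φ₁.fvx ∪ φ₂.fvx
  | .wand φ₁ φ₂ => φ₁.fvx ∪ φ₂.fvx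

/-- The permutation `r` of `Loc ∪ Val ∪ Atoms` fixes the two atoms. -/
def FixesAtoms (r : Equiv.Perm SVal) : Prop :=
  r (Sum.inr SAtom.anil) = Sum.inr SAtom.anil ∧
  r (Sum.inr SAtom.ahash) = Sum.inr SAtom.ahash

/-- `(sx, sa, h) ≈_P (sx', sa', h')`: there is a bijection `r` of the values,
fixing the atoms (hence permuting the locations), extended letterwise to
sequences, which maps the first model to the second on `P`, on the heap and
on all sequence variables. -/
def Approx (P : Finset ℕ) (sx : ℕ → SVal) (sa : ℕ → Word) (h : Heap)
    (sx' : ℕ → SVal) (sa' : ℕ → Word) (h' : Heap) : Prop :=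
  ∃ r : Equiv.Perm SVal, FixesAtoms r ∧
    (∀ x ∈ P, r (sx x) = sx' x) ∧
    (∀ l l' : ℕ, r (Sum.inl l) = Sum.inl l' →
      ((l ∈ h.keys ↔ l' ∈ h'.keys) ∧
        ∀ w : Word, h.lookup l = some w → h'.lookup l' = some (w.map r))) ∧
    (∀ a : ℕ, (sa a).map r = sa' a)


/-! Auxiliary machinery for the proof. -/

/-- The heap obtained by renaming locations with an injective `π` and values
letterwise with `g`. -/
noncomputable def mappedHeap (π : ℕ → ℕ) (hπ : Function.Injective π)
    (g : SVal → SVal) (h : Heap) : Heap :=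
  ⟨h.entries.map (fun s => ⟨π s.1, s.2.map g⟩), by
    rw [← Multiset.nodup_keys]
    have : (h.entries.map (fun s : Σ _ : ℕ, Word => (⟨π s.1, s.2.map g⟩ : Σ _ : ℕ, Word))).keys
        = h.entries.keys.map π := by
      simp [Multiset.keys, Multiset.map_map, Function.comp]
    rw [this]
    exact (Multiset.nodup_keys.mpr h.nodupKeys).map hπ⟩

theorem mappedHeap_keys (π : ℕ → ℕ) (hπ : Function.Injective π)
    (g : SVal → SVal) (h : Heap) (l : ℕ) :
    π l ∈ (mappedHeap π hπ g h).keys ↔ l ∈ h.keys := by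
  simp only [Finmap.mem_keys, Finmap.mem_def, mappedHeap, Multiset.keys,
    Multiset.map_map, Multiset.mem_map, Function.comp]
  constructor
  · rintro ⟨s, hs, hsl⟩
    exact ⟨s, hs, hπ hsl⟩
  · rintro ⟨s, hs, hsl⟩
    exact ⟨s, hs, by rw [hsl]⟩

theorem mappedHeap_lookup (π : ℕ → ℕ) (hπ : Function.Injective π)
    (g : SVal → SVal) (h : Heap) (l : ℕ) (w : Word) (hw : h.lookup l = some w) :
    (mappedHeap π hπ g h).lookup (π l) = some (w.map g) := by
  rw [Finmap.lookup_eq_some_iff] at hw ⊢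
  exact Multiset.mem_map_of_mem _ hw

/-- Any finset of size at most `n` can be moved inside `Finset.range n` by a
permutation of `ℕ`. -/
theorem perm_into_range (L : Finset ℕ) (n : ℕ) (hcard : L.card ≤ n) :
    ∃ π : Equiv.Perm ℕ, ∀ l ∈ L, π l < n := by
  classical
  obtain ⟨T, hTsub, hTcard⟩ := Finset.exists_subset_card_eq
    (show L.card ≤ (Finset.range n).card by simpa using hcard)
  have e : (L : Set ℕ) ≃ (T : Set ℕ) :=
    (Finset.equivOfCardEq hTcard.symm : (↥L ≃ ↥T))
  have hLinf : Infinite ↥((L : Set ℕ)ᶜ) :=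
    Set.infinite_coe_iff.mpr (L.finite_toSet.infinite_compl)
  have hTinf : Infinite ↥((T : Set ℕ)ᶜ) :=
    Set.infinite_coe_iff.mpr (T.finite_toSet.infinite_compl)
  letI := Nat.Subtype.denumerable ((L : Set ℕ)ᶜ)
  letI := Nat.Subtype.denumerable ((T : Set ℕ)ᶜ)
  have ec : ↥((L : Set ℕ)ᶜ) ≃ ↥((T : Set ℕ)ᶜ) := Denumerable.equiv₂ _ _
  refine ⟨(Equiv.Set.sumCompl (L : Set ℕ)).symm.trans
    ((e.sumCongr ec).trans (Equiv.Set.sumCompl (T : Set ℕ))), ?_⟩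
  intro l hl
  have h1 : (Equiv.Set.sumCompl (L : Set ℕ)).symm l = Sum.inl ⟨l, by simpa using hl⟩ :=
    Equiv.Set.sumCompl_symm_apply_of_mem (by simpa using hl)
  have h2 : ((Equiv.Set.sumCompl (L : Set ℕ)).symm.trans
      ((e.sumCongr ec).trans (Equiv.Set.sumCompl (T : Set ℕ)))) l
      = ↑(e ⟨l, by simpa using hl⟩) := by
    rw [Equiv.trans_apply, Equiv.trans_apply, h1]
    exact Equiv.Set.sumCompl_apply_inl _ _
  rw [h2]
  have hm : ↑(e ⟨l, by simpa using hl⟩) ∈ T := (e _).2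
  simpa using hTsub hm

/-- Small-stack representative: every model is `≈_{FV_x(φ)}`-equivalent to a
model whose stack maps the variables outside `FV_x(φ)` to atoms and the
variables of `φ` into the first `|FV_x(φ)|` locations (locations being the
naturals, these are `0, …, |FV_x(φ)| - 1`) together with the atoms. -/
theorem small_stack_representative
    (sx : ℕ → SVal) (sa : ℕ → Word) (h : Heap) (φ : PFormula) :
    ∃ (sx' : ℕ → SVal) (sa' : ℕ → Word) (h' : Heap),
      (∀ x : ℕ, x ∉ φ.fvx →
        sx' x = Sum.inr SAtom.anil ∨ sx' x = Sum.inr SAtom.ahash) ∧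
      (∀ x ∈ φ.fvx,
        (∃ l : ℕ, l < φ.fvx.card ∧ sx' x = Sum.inl l) ∨
          sx' x = Sum.inr SAtom.anil ∨ sx' x = Sum.inr SAtom.ahash) ∧
      Approx φ.fvx sx sa h sx' sa' h' := by
  classical
  set n := φ.fvx.card with hn
  set L : Finset ℕ := φ.fvx.biUnion (fun x => match sx x with
    | Sum.inl l => {l} | Sum.inr _ => ∅) with hL
  have hmemL : ∀ x ∈ φ.fvx, ∀ l, sx x = Sum.inl l → l ∈ L := by
    intro x hx l hxl
    rw [hL]
    refine Finset.mem_biUnion.mpr ⟨x, hx, ?_⟩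
    rw [hxl]
    simp
  have hcard : L.card ≤ n := by
    rw [hL, hn]
    refine le_trans Finset.card_biUnion_le ?_
    refine le_trans (Finset.sum_le_card_nsmul _ _ 1 ?_) (by simp)
    intro x _
    cases hsx : sx x <;> simp
  obtain ⟨π, hπ⟩ := perm_into_range L n hcard
  set r : Equiv.Perm SVal := Equiv.sumCongr π (Equiv.refl SAtom) with hr
  refine ⟨fun x => if x ∈ φ.fvx then r (sx x) else Sum.inr SAtom.anil,
    fun a => (sa a).map r, mappedHeap π π.injective r h, ?_, ?_, ?_⟩
  · intro x hx
    left
    simp [if_neg hx]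
  · intro x hx
    simp only [if_pos hx]
    cases hsx : sx x with
    | inl l =>
      left
      exact ⟨π l, hπ l (hmemL x hx l hsx), by simp [hr, hsx]⟩
    | inr a =>
      right
      cases a
      · left; simp [hr, hsx]
      · right; simp [hr, hsx]
  · refine ⟨r, ⟨rfl, rfl⟩, ?_, ?_, fun a => rfl⟩
    · intro x hx
      simp [if_pos hx]
    · intro l l' hrl
      have hl' : l' = π l := by
        have : r (Sum.inl l) = Sum.inl (π l) := rfl
        rw [this] at hrl
        exact (Sum.inl.inj hrl).symm
      subst hl'
      exact ⟨(mappedHeap_keys π π.injective r h l).symm,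
        fun w hw => mappedHeap_lookup π π.injective r h l w hw⟩
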